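/- arXiv:2405.03100 — 4 statements merged into one kernel-verified Lean document; each statement's English description precedes it below -/
import Mathlib

section
/- (Lemma, N-qubit k-setting protocol — sufficiency.) Let N > M ≥ 1, n = 2^(N−M), O = Fin (2^M), and k ≥ 1. Let ρ_B be a density matrix on ℂ^n and ρ̃ : Fin k → O → Matrix n n ℂ a family such that: (i) each ρ̃ ℓ a is an unnormalized pure state; (ii) ∑_{a∈O} ρ̃ ℓ a = ρ_B for every setting ℓ; (iii) within each setting the nonzero conditional states are pairwise non-proportional, i.e. if a ≠ a', ρ̃ ℓ a ≠ 0 and ρ̃ ℓ a' ≠ 0, then ρ̃ ℓ a is not a positive real multiple of ρ̃ ℓ a'. If ρ̃ admits an LHS model, then all k settings produce the same results: for all settings ℓ, ℓ', the set {ρ̃ ℓ a | a ∈ O, ρ̃ ℓ a ≠ 0} equals the set {ρ̃ ℓ' a | a ∈ O, ρ̃ ℓ' a ≠ 0}. Equivalently, if at least one setting yields a set of nonzero conditional states different from another's, no LHS model exists (the EPR steering paradox 'k_Q = (1+δ_k)_C' with 0 ≤ δ_k < k−1). -/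
/-! In an LHS model every conditional state `ρt ℓ a` is a nonnegative combination of the hidden
states `ρ ξ`. A positive semidefinite summand of a rank-one matrix is a multiple of it, so every
hidden state that contributes to the pure state `ρt ℓ a` is its normalisation. By
non-proportionality, a hidden state of positive weight then answers deterministically, with the
one outcome whose conditional state it normalises. Hence `ρt ℓ a = W(σ) • σ`, where `σ` is that
normalisation and `W(σ)` the total weight of the hidden variables carrying `σ`; this does not
depend on the setting. -/

open Matrix BigOperators
open scoped ComplexOrder

noncomputable section

/-- A density matrix: positive semidefinite with trace 1. -/
def IsDensityMatrix {n : ℕ} (A : Matrix (Fin n) (Fin n) ℂ) : Prop :=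
  A.PosSemidef ∧ A.trace = 1

/-- An unnormalized pure state: a nonnegative real multiple of a rank-one
projection `v vᴴ` onto a unit vector `v`. -/
def IsUnnormalizedPure {n : ℕ} (A : Matrix (Fin n) (Fin n) ℂ) : Prop :=
  ∃ (c : ℝ) (v : Fin n → ℂ), 0 ≤ c ∧ star v ⬝ᵥ v = 1 ∧ A = c • vecMulVec v (star v)

/-- `A` is a positive real multiple of `B`. -/
def IsPosMultiple {n : ℕ} (A B : Matrix (Fin n) (Fin n) ℂ) : Prop :=
  ∃ c : ℝ, 0 < c ∧ A = c • B

/-- A local-hidden-state (LHS) model for a family of unnormalized conditional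
states `ρt ℓ a` (setting `ℓ`, outcome `a`). -/
def HasLHSModel {n k : ℕ} {O : Type*} [Fintype O]
    (ρt : Fin k → O → Matrix (Fin n) (Fin n) ℂ) : Prop :=
  ∃ (m : ℕ) (w : Fin m → ℝ) (ρ : Fin m → Matrix (Fin n) (Fin n) ℂ)
    (p : O → Fin k → Fin m → ℝ),
    (∀ ξ, 0 ≤ w ξ) ∧ ((∑ ξ, w ξ) = 1) ∧
    (∀ ξ, IsDensityMatrix (ρ ξ)) ∧
    (∀ a ℓ ξ, 0 ≤ p a ℓ ξ) ∧
    (∀ ℓ ξ, (∑ a, p a ℓ ξ) = 1) ∧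
    (∀ ℓ a, ρt ℓ a = ∑ ξ, p a ℓ ξ • w ξ • ρ ξ)


namespace Matrix

variable {ι 𝕜 : Type*} [Fintype ι] [RCLike 𝕜]

theorem PosSemidef.mulVec_eq_zero_of_add_mulVec_eq_zero {A B : Matrix ι ι 𝕜}
    (hA : A.PosSemidef) (hB : B.PosSemidef) {x : ι → 𝕜} (h : (A + B) *ᵥ x = 0) :
    A *ᵥ x = 0 := by
  rw [← hA.dotProduct_mulVec_zero_iff]
  have hsum : star x ⬝ᵥ A *ᵥ x + star x ⬝ᵥ B *ᵥ x = 0 := by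
    rw [← dotProduct_add, ← add_mulVec, h, dotProduct_zero]
  exact ((add_eq_zero_iff_of_nonneg (hA.dotProduct_mulVec_nonneg x)
    (hB.dotProduct_mulVec_nonneg x)).mp hsum).1

theorem vecMulVec_mul_vecMulVec_self {v : ι → 𝕜} (hv : star v ⬝ᵥ v = 1) :
    vecMulVec v (star v) * vecMulVec v (star v) = vecMulVec v (star v) := by
  rw [vecMulVec_mul_vecMulVec, hv, one_smul]

theorem PosSemidef.eq_trace_smul_of_add_eq_smul_vecMulVec {A B : Matrix ι ι 𝕜}
    (hA : A.PosSemidef) (hB : B.PosSemidef) {v : ι → 𝕜} (hv : star v ⬝ᵥ v = 1) {c : ℝ}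
    (h : A + B = c • vecMulVec v (star v)) : A = A.trace • vecMulVec v (star v) := by
  set P := vecMulVec v (star v)
  -- `A` vanishes on `v⟂` because `A + B` does, so `A = A * P = P * A = P * A * P`.
  have hAP : A * P = A := ext_iff_mulVec.mpr fun x => by
    have hx := hA.mulVec_eq_zero_of_add_mulVec_eq_zero hB (x := x - P *ᵥ x) <| by
      rw [h, mulVec_sub, mulVec_mulVec, smul_mul_assoc, vecMulVec_mul_vecMulVec_self hv, sub_self]
    rwa [mulVec_sub, mulVec_mulVec, sub_eq_zero, eq_comm] at hx
  have hPA : P * A = A := by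
    simpa [P, conjTranspose_vecMulVec, hA.1.eq] using congrArg (·ᴴ) hAP
  have hs : A = (star v ᵥ* A ⬝ᵥ v) • P := by
    rw [← vecMulVec_smul, ← vecMulVec_mul_vecMulVec, ← vecMulVec_mul, hPA, hAP]
  have htr : A.trace = star v ᵥ* A ⬝ᵥ v := by
    conv_lhs => rw [hs, trace_smul, trace_vecMulVec, dotProduct_comm v, hv, smul_eq_mul, mul_one]
  rwa [htr]

end Matrix

variable {n : ℕ}

theorem IsDensityMatrix.ne_zero {A : Matrix (Fin n) (Fin n) ℂ} (hA : IsDensityMatrix A) :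
    A ≠ 0 := by
  rintro rfl
  simpa using hA.2

namespace IsPosMultiple

variable {A B C : Matrix (Fin n) (Fin n) ℂ}

theorem symm (h : IsPosMultiple A B) : IsPosMultiple B A := by
  obtain ⟨c, hc, rfl⟩ := h
  exact ⟨c⁻¹, inv_pos.mpr hc, by rw [smul_smul, inv_mul_cancel₀ hc.ne', one_smul]⟩

theorem trans (hAB : IsPosMultiple A B) (hBC : IsPosMultiple B C) : IsPosMultiple A C := by
  obtain ⟨b, hb, rfl⟩ := hAB
  obtain ⟨c, hc, rfl⟩ := hBC
  exact ⟨b * c, mul_pos hb hc, smul_smul b c C⟩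

theorem ne_zero (h : IsPosMultiple A B) (hB : B ≠ 0) : A ≠ 0 := by
  obtain ⟨c, hc, rfl⟩ := h
  exact smul_ne_zero hc.ne' hB

theorem eq_of_trace_eq_one (hB : IsPosMultiple A B) (hC : IsPosMultiple A C)
    (hBtr : B.trace = 1) (hCtr : C.trace = 1) : B = C := by
  obtain ⟨b, hb, rfl⟩ := hB
  obtain ⟨c, -, hbc⟩ := hC
  obtain rfl : b = c := by
    simpa [hBtr, hCtr] using congrArg trace hbc
  exact smul_right_injective _ hb.ne' hbc

end IsPosMultiple

theorem IsUnnormalizedPure.isPosMultiple_of_eq_sum {ι : Type*} [Fintype ι]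
    {A : Matrix (Fin n) (Fin n) ℂ} (hA : IsUnnormalizedPure A) {q : ι → ℝ}
    {ρ : ι → Matrix (Fin n) (Fin n) ℂ} (hq : ∀ i, 0 ≤ q i) (hρ : ∀ i, IsDensityMatrix (ρ i))
    (hsum : A = ∑ i, q i • ρ i) {i : ι} (hi : 0 < q i) : IsPosMultiple A (ρ i) := by
  classical
  obtain ⟨c, v, -, hv, rfl⟩ := hA
  have hρi : ρ i = vecMulVec v (star v) := by
    have hsplit : q i • ρ i + ∑ j ∈ Finset.univ.erase i, q j • ρ j =
        c • vecMulVec v (star v) := by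
      rw [Finset.add_sum_erase _ (fun j => q j • ρ j) (Finset.mem_univ i), hsum]
    have hqρ := ((hρ i).1.smul (hq i)).eq_trace_smul_of_add_eq_smul_vecMulVec
      (posSemidef_sum _ fun j _ => (hρ j).1.smul (hq j)) hv hsplit
    rw [trace_smul, (hρ i).2, Complex.real_smul, mul_one, ← Complex.coe_smul] at hqρ
    exact smul_right_injective _ hi.ne' hqρ
  have hc : c = ∑ j, q j := by
    have htr := congrArg trace hsum
    simp only [trace_sum, trace_smul, (hρ _).2, trace_vecMulVec, dotProduct_comm v, hv,
      Complex.real_smul, mul_one] at htr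
    exact_mod_cast htr
  refine ⟨c, ?_, by rw [hρi]⟩
  rw [hc]
  exact hi.trans_le (Finset.single_le_sum (fun j _ => hq j) (Finset.mem_univ i))

def PairwiseNonProportional {n : ℕ} {O : Type*} (f : O → Matrix (Fin n) (Fin n) ℂ) : Prop :=
  ∀ a a', a ≠ a' → f a ≠ 0 → f a' ≠ 0 → ¬ IsPosMultiple (f a) (f a')

structure IsLHSModel {n k m : ℕ} {O : Type*} [Fintype O]
    (ρt : Fin k → O → Matrix (Fin n) (Fin n) ℂ) (w : Fin m → ℝ)
    (ρ : Fin m → Matrix (Fin n) (Fin n) ℂ) (p : O → Fin k → Fin m → ℝ) : Prop where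
  weight_nonneg : ∀ ξ, 0 ≤ w ξ
  sum_weight : ∑ ξ, w ξ = 1
  isDensityMatrix : ∀ ξ, IsDensityMatrix (ρ ξ)
  response_nonneg : ∀ a ℓ ξ, 0 ≤ p a ℓ ξ
  sum_response : ∀ ℓ ξ, ∑ a, p a ℓ ξ = 1
  eq_sum : ∀ ℓ a, ρt ℓ a = ∑ ξ, p a ℓ ξ • w ξ • ρ ξ

theorem HasLHSModel.exists_isLHSModel {n k : ℕ} {O : Type*} [Fintype O]
    {ρt : Fin k → O → Matrix (Fin n) (Fin n) ℂ} (h : HasLHSModel ρt) :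
    ∃ (m : ℕ) (w : Fin m → ℝ) (ρ : Fin m → Matrix (Fin n) (Fin n) ℂ)
      (p : O → Fin k → Fin m → ℝ), IsLHSModel ρt w ρ p := by
  obtain ⟨m, w, ρ, p, h₁, h₂, h₃, h₄, h₅, h₆⟩ := h
  exact ⟨m, w, ρ, p, h₁, h₂, h₃, h₄, h₅, h₆⟩

namespace IsLHSModel

variable {k m : ℕ} {O : Type*} [Fintype O] {ρt : Fin k → O → Matrix (Fin n) (Fin n) ℂ}
  {w : Fin m → ℝ} {ρ : Fin m → Matrix (Fin n) (Fin n) ℂ} {p : O → Fin k → Fin m → ℝ}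
  {ℓ : Fin k} {a : O} {ξ ξ₀ : Fin m}

theorem isPosMultiple (h : IsLHSModel ρt w ρ p) (hpure : IsUnnormalizedPure (ρt ℓ a))
    (hw : 0 < w ξ) (hp : 0 < p a ℓ ξ) : IsPosMultiple (ρt ℓ a) (ρ ξ) :=
  hpure.isPosMultiple_of_eq_sum (q := fun ξ => p a ℓ ξ * w ξ)
    (fun ξ => mul_nonneg (h.response_nonneg a ℓ ξ) (h.weight_nonneg ξ)) h.isDensityMatrix
    (by simp only [mul_smul]; exact h.eq_sum ℓ a) (mul_pos hp hw)

theorem exists_response_pos (h : IsLHSModel ρt w ρ p) (ℓ : Fin k) (ξ : Fin m) :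
    ∃ a, 0 < p a ℓ ξ := by
  by_contra! hp
  linarith [h.sum_response ℓ ξ, Finset.sum_nonpos fun a (_ : a ∈ Finset.univ) => hp a]

theorem exists_pos_of_ne_zero (h : IsLHSModel ρt w ρ p) (hne : ρt ℓ a ≠ 0) :
    ∃ ξ, 0 < w ξ ∧ 0 < p a ℓ ξ := by
  obtain ⟨ξ, -, hξ⟩ := Finset.exists_ne_zero_of_sum_ne_zero (h.eq_sum ℓ a ▸ hne)
  refine ⟨ξ, (h.weight_nonneg ξ).lt_of_ne' ?_, (h.response_nonneg a ℓ ξ).lt_of_ne' ?_⟩ <;>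
    rintro hz <;> simp [hz] at hξ

theorem outcome_eq_of_response_pos (h : IsLHSModel ρt w ρ p)
    (hpure : ∀ a, IsUnnormalizedPure (ρt ℓ a))
    (hdist : PairwiseNonProportional (ρt ℓ))
    {ξ' : Fin m} (hw : 0 < w ξ) (hw' : 0 < w ξ') (hρ : ρ ξ = ρ ξ') {a' : O}
    (hp : 0 < p a ℓ ξ) (hp' : 0 < p a' ℓ ξ') : a = a' := by
  by_contra hne
  have ha := h.isPosMultiple (hpure a) hw hp
  have ha' := h.isPosMultiple (hpure a') hw' hp'
  rw [← hρ] at ha'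
  have hρ0 := (h.isDensityMatrix ξ).ne_zero
  exact hdist a a' hne (ha.ne_zero hρ0) (ha'.ne_zero hρ0) (ha.trans ha'.symm)

theorem response_eq_one (h : IsLHSModel ρt w ρ p)
    (hpure : ∀ a, IsUnnormalizedPure (ρt ℓ a))
    (hdist : PairwiseNonProportional (ρt ℓ))
    (hw : 0 < w ξ) (hp : 0 < p a ℓ ξ) : p a ℓ ξ = 1 := by
  rw [← h.sum_response ℓ ξ, Finset.sum_eq_single_of_mem a (Finset.mem_univ a)]
  intro b _ hba
  by_contra hb
  exact hba (h.outcome_eq_of_response_pos hpure hdist hw hw rfl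
    ((h.response_nonneg b ℓ ξ).lt_of_ne' hb) hp)

theorem response_eq_zero (h : IsLHSModel ρt w ρ p) (hpure : IsUnnormalizedPure (ρt ℓ a))
    (hw : 0 < w ξ) (hw₀ : 0 < w ξ₀) (hp₀ : 0 < p a ℓ ξ₀) (hne : ρ ξ ≠ ρ ξ₀) :
    p a ℓ ξ = 0 := by
  by_contra hp
  exact hne ((h.isPosMultiple hpure hw ((h.response_nonneg a ℓ ξ).lt_of_ne' hp)).eq_of_trace_eq_one
    (h.isPosMultiple hpure hw₀ hp₀) (h.isDensityMatrix ξ).2 (h.isDensityMatrix ξ₀).2)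

open Classical in
theorem eq_sum_weight_smul (h : IsLHSModel ρt w ρ p)
    (hpure : ∀ a, IsUnnormalizedPure (ρt ℓ a))
    (hdist : PairwiseNonProportional (ρt ℓ))
    (hw₀ : 0 < w ξ₀) (hp₀ : 0 < p a ℓ ξ₀) :
    ρt ℓ a = (∑ ξ ∈ Finset.univ.filter (fun ξ => ρ ξ = ρ ξ₀), w ξ) • ρ ξ₀ := by
  have hterm : ∀ ξ, p a ℓ ξ • w ξ • ρ ξ = if ρ ξ = ρ ξ₀ then w ξ • ρ ξ₀ else 0 := by
    intro ξ
    rcases (h.weight_nonneg ξ).eq_or_lt with hw | hw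
    · simp [← hw]
    split_ifs with hρ
    · obtain ⟨b, hb⟩ := h.exists_response_pos ℓ ξ
      obtain rfl := h.outcome_eq_of_response_pos hpure hdist hw hw₀ hρ hb hp₀
      rw [h.response_eq_one hpure hdist hw hb, one_smul, hρ]
    · rw [h.response_eq_zero (hpure a) hw hw₀ hp₀ hρ, zero_smul]
  rw [h.eq_sum ℓ a, Finset.sum_congr rfl fun ξ _ => hterm ξ, ← Finset.sum_filter,
    Finset.sum_smul]

theorem exists_eq_of_ne_zero (h : IsLHSModel ρt w ρ p)
    (hpure : ∀ ℓ a, IsUnnormalizedPure (ρt ℓ a))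
    (hdist : ∀ ℓ, PairwiseNonProportional (ρt ℓ))
    (hne : ρt ℓ a ≠ 0) (ℓ' : Fin k) : ∃ a', ρt ℓ' a' = ρt ℓ a := by
  obtain ⟨ξ, hw, hp⟩ := h.exists_pos_of_ne_zero hne
  obtain ⟨a', hp'⟩ := h.exists_response_pos ℓ' ξ
  exact ⟨a', by rw [h.eq_sum_weight_smul (hpure ℓ') (hdist ℓ') hw hp',
    h.eq_sum_weight_smul (hpure ℓ) (hdist ℓ) hw hp]⟩

end IsLHSModel

theorem qubit_lhs_implies_same_results_general {N M k : ℕ}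
    (ρt : Fin k → Fin (2 ^ M) → Matrix (Fin (2 ^ (N - M))) (Fin (2 ^ (N - M))) ℂ)
    (hpure : ∀ ℓ a, IsUnnormalizedPure (ρt ℓ a))
    (hdist : ∀ ℓ a a', a ≠ a' → ρt ℓ a ≠ 0 → ρt ℓ a' ≠ 0 →
      ¬ IsPosMultiple (ρt ℓ a) (ρt ℓ a'))
    (hLHS : HasLHSModel ρt) :
    ∀ ℓ ℓ' : Fin k,
      {A | ∃ a, ρt ℓ a ≠ 0 ∧ ρt ℓ a = A} = {A | ∃ a, ρt ℓ' a ≠ 0 ∧ ρt ℓ' a = A} := by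
  obtain ⟨m, w, ρ, p, hmodel⟩ := hLHS.exists_isLHSModel
  have hsub : ∀ ℓ ℓ', {A | ∃ a, ρt ℓ a ≠ 0 ∧ ρt ℓ a = A} ⊆
      {A | ∃ a, ρt ℓ' a ≠ 0 ∧ ρt ℓ' a = A} := by
    rintro ℓ ℓ' _ ⟨a, hne, rfl⟩
    obtain ⟨a', ha'⟩ := hmodel.exists_eq_of_ne_zero hpure hdist hne ℓ'
    exact ⟨a', ha' ▸ hne, ha'⟩
  exact fun ℓ ℓ' => (hsub ℓ ℓ').antisymm (hsub ℓ' ℓ)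

/-- N-qubit k-setting lemma, sufficiency: if Bob's conditional
states (all unnormalized pure states, summing to his reduced density matrix
`ρB` in every setting, and pairwise non-proportional within each setting when
nonzero) admit an LHS model, then all `k` settings produce the same set of
nonzero conditional states. -/
theorem qubit_lhs_implies_same_results {N M k : ℕ} (hM : 1 ≤ M) (hNM : M < N)
    (hk : 1 ≤ k)
    (ρB : Matrix (Fin (2 ^ (N - M))) (Fin (2 ^ (N - M))) ℂ)
    (hρB : IsDensityMatrix ρB)
    (ρt : Fin k → Fin (2 ^ M) → Matrix (Fin (2 ^ (N - M))) (Fin (2 ^ (N - M))) ℂ)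
    (hpure : ∀ ℓ a, IsUnnormalizedPure (ρt ℓ a))
    (hsum : ∀ ℓ, (∑ a, ρt ℓ a) = ρB)
    (hdist : ∀ ℓ a a', a ≠ a' → ρt ℓ a ≠ 0 → ρt ℓ a' ≠ 0 →
      ¬ IsPosMultiple (ρt ℓ a) (ρt ℓ a'))
    (hLHS : HasLHSModel ρt) :
    ∀ ℓ ℓ' : Fin k,
      {A | ∃ a, ρt ℓ a ≠ 0 ∧ ρt ℓ a = A} = {A | ∃ a, ρt ℓ' a ≠ 0 ∧ ρt ℓ' a = A} :=
  qubit_lhs_implies_same_results_general ρt hpure hdist hLHS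
end
end

section
/- (Case: all conditional states different.) Let n ≥ 1, O a finite nonempty outcome set, and ρ̃ : Fin 2 → O → Matrix n n ℂ a family such that ∑_{a∈O} ρ̃ ℓ a = ρ_B (a fixed density matrix) for ℓ = 0, 1, every ρ̃ ℓ a is a nonzero unnormalized pure state, and all the conditional states are pairwise non-proportional: for (ℓ,a) ≠ (ℓ',a'), ρ̃ ℓ a is not a positive real multiple of ρ̃ ℓ' a'. Then ρ̃ admits no LHS model (the steering paradox '2_Q = 1_C', i.e. δ = 0). -/
open Matrix BigOperators
open scoped ComplexOrder

noncomputable section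

/-!
A hidden state `ρ ξ` of positive weight is reached with positive probability by some outcome
`a₀` of setting `0` and some outcome `a₁` of setting `1`, so a positive multiple of `ρ ξ` lies
below both `ρt 0 a₀` and `ρt 1 a₁` in the Loewner order. A positive semidefinite matrix below a
multiple of a rank-one projection `v vᴴ` vanishes on `v^⊥` and is therefore a multiple of `v vᴴ`.
Hence `ρ ξ` is proportional to both conditional states, which are then proportional to each other.
-/

open scoped MatrixOrder

namespace Matrix

variable {n 𝕜 : Type*} [Fintype n] [RCLike 𝕜]

lemma PosSemidef.mulVec_eq_zero_of_le {A B : Matrix n n 𝕜} (hA : A.PosSemidef) (hAB : A ≤ B)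
    {z : n → 𝕜} (hBz : B *ᵥ z = 0) : A *ᵥ z = 0 := by
  have hle := (le_iff.mp hAB).dotProduct_mulVec_nonneg z
  rw [sub_mulVec, hBz, zero_sub, dotProduct_neg, neg_nonneg] at hle
  exact (hA.dotProduct_mulVec_zero_iff z).mp (le_antisymm hle (hA.dotProduct_mulVec_nonneg z))

lemma IsHermitian.eq_smul_vecMulVec_of_mulVec_eq_zero {A : Matrix n n 𝕜} (hA : A.IsHermitian)
    {v : n → 𝕜} (hv : star v ⬝ᵥ v = 1) (h : ∀ z, star v ⬝ᵥ z = 0 → A *ᵥ z = 0) :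
    A = (star v ⬝ᵥ A *ᵥ v) • vecMulVec v (star v) := by
  set P := vecMulVec v (star v)
  -- `A` kills the range `v^⊥` of `1 - P`, so `A P = A`; taking adjoints, `P A = A`, hence `A = P A P`.
  have hAP : A * P = A := ext_iff_mulVec.mpr fun u => by
    rw [← mulVec_mulVec, ← sub_eq_zero, ← mulVec_sub]
    apply h
    simp [P, vecMulVec_mulVec, dotProduct_sub, hv]
  have hPA : P * A = A := by
    simpa [P, conjTranspose_vecMulVec, hA.eq] using congrArg Matrix.conjTranspose hAP
  calc A = P * A * P := by rw [hPA, hAP]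
    _ = _ := by rw [vecMulVec_mul, vecMulVec_mul_vecMulVec, vecMulVec_smul, dotProduct_mulVec]

lemma PosSemidef.eq_trace_smul_of_le_smul_vecMulVec {A : Matrix n n 𝕜} (hA : A.PosSemidef)
    {v : n → 𝕜} (hv : star v ⬝ᵥ v = 1) {c : ℝ} (hle : A ≤ c • vecMulVec v (star v)) :
    A = A.trace • vecMulVec v (star v) := by
  have hA_eq := hA.isHermitian.eq_smul_vecMulVec_of_mulVec_eq_zero hv fun z hz =>
    hA.mulVec_eq_zero_of_le hle (by simp [smul_mulVec, vecMulVec_mulVec, hz])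
  have htrace : A.trace = star v ⬝ᵥ A *ᵥ v := by
    conv_lhs => rw [hA_eq]
    rw [trace_smul, trace_vecMulVec, dotProduct_comm v, hv, smul_eq_mul, mul_one]
  rwa [htrace]

end Matrix

lemma exists_pos_of_sum_eq_one {ι : Type*} [Fintype ι] {f : ι → ℝ} (h : ∑ i, f i = 1) :
    ∃ i, 0 < f i := by
  obtain ⟨i, -, hi⟩ := Finset.exists_lt_of_sum_lt (f := 0) (g := f) (s := .univ) (by simp [h])
  exact ⟨i, hi⟩

section

variable {n : ℕ}

lemma IsPosMultiple.symm_s8 {A B : Matrix (Fin n) (Fin n) ℂ} (h : IsPosMultiple A B) :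
    IsPosMultiple B A := by
  obtain ⟨c, hc, rfl⟩ := h
  exact ⟨c⁻¹, inv_pos.mpr hc, by rw [smul_smul, inv_mul_cancel₀ hc.ne', one_smul]⟩

lemma IsPosMultiple.trans_s8 {A B C : Matrix (Fin n) (Fin n) ℂ} (hAB : IsPosMultiple A B)
    (hBC : IsPosMultiple B C) : IsPosMultiple A C := by
  obtain ⟨c, hc, rfl⟩ := hAB
  obtain ⟨d, hd, rfl⟩ := hBC
  exact ⟨c * d, mul_pos hc hd, by rw [smul_smul]⟩

lemma IsUnnormalizedPure.isPosMultiple_of_smul_le {A ρ : Matrix (Fin n) (Fin n) ℂ}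
    (hA : IsUnnormalizedPure A) (hA0 : A ≠ 0) (hρ : IsDensityMatrix ρ) {t : ℝ} (ht : 0 < t)
    (hle : t • ρ ≤ A) : IsPosMultiple A ρ := by
  obtain ⟨c, v, hc, hv, rfl⟩ := hA
  have htρ := (hρ.1.smul ht.le).eq_trace_smul_of_le_smul_vecMulVec hv hle
  rw [trace_smul, hρ.2, smul_one_smul] at htρ
  have hρ_eq : ρ = vecMulVec v (star v) := smul_right_injective _ ht.ne' htρ
  refine ⟨c, hc.lt_of_ne ?_, by rw [hρ_eq]⟩
  rintro rfl
  exact hA0 (zero_smul _ _)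

end

theorem no_lhs_of_all_different_general {n : ℕ}
    {O : Type*} [Fintype O]
    (ρt : Fin 2 → O → Matrix (Fin n) (Fin n) ℂ)
    (hpure : ∀ ℓ a, IsUnnormalizedPure (ρt ℓ a))
    (hne : ∀ ℓ a, ρt ℓ a ≠ 0)
    (hdist : ∀ ℓ a ℓ' a', (ℓ, a) ≠ (ℓ', a') →
      ¬ IsPosMultiple (ρt ℓ a) (ρt ℓ' a')) :
    ¬ HasLHSModel ρt := by
  rintro ⟨m, w, ρ, p, hw, hwsum, hρ, hp, hpsum, hmodel⟩
  obtain ⟨ξ, hξ⟩ := exists_pos_of_sum_eq_one hwsum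
  have hmult : ∀ ℓ, ∃ a, IsPosMultiple (ρt ℓ a) (ρ ξ) := fun ℓ => by
    obtain ⟨a, ha⟩ := exists_pos_of_sum_eq_one (hpsum ℓ ξ)
    refine ⟨a, (hpure ℓ a).isPosMultiple_of_smul_le (hne ℓ a) (hρ ξ) (mul_pos ha hξ) ?_⟩
    rw [hmodel ℓ a, mul_smul]
    exact Finset.single_le_sum (fun ξ' _ => nonneg_iff_posSemidef.mpr
      (((hρ ξ').1.smul (hw ξ')).smul (hp a ℓ ξ'))) (Finset.mem_univ ξ)
  obtain ⟨a₀, h₀⟩ := hmult 0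
  obtain ⟨a₁, h₁⟩ := hmult 1
  exact hdist 0 a₀ 1 a₁ (by simp) (h₀.trans_s8 h₁.symm_s8)

/-- all conditional states different: if every conditional state
is a nonzero unnormalized pure state, the states of each setting sum to a
fixed density matrix `ρB`, and all conditional states are pairwise
non-proportional, then no LHS model exists (the paradox "2_Q = 1_C"). -/
theorem no_lhs_of_all_different {n : ℕ} (hn : 1 ≤ n)
    {O : Type*} [Fintype O] [Nonempty O]
    (ρB : Matrix (Fin n) (Fin n) ℂ) (hρB : IsDensityMatrix ρB)
    (ρt : Fin 2 → O → Matrix (Fin n) (Fin n) ℂ)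
    (hsum : ∀ ℓ, (∑ a, ρt ℓ a) = ρB)
    (hpure : ∀ ℓ a, IsUnnormalizedPure (ρt ℓ a))
    (hne : ∀ ℓ a, ρt ℓ a ≠ 0)
    (hdist : ∀ ℓ a ℓ' a', (ℓ, a) ≠ (ℓ', a') →
      ¬ IsPosMultiple (ρt ℓ a) (ρt ℓ' a')) :
    ¬ HasLHSModel ρt :=
  no_lhs_of_all_different_general ρt hpure hne hdist
end
end

section
/- (Example 1: arbitrary 2-qubit pure entangled state.) For every θ ∈ (0, π/2), the 2-setting, 2-outcome family ρ̃ : Fin 2 → Fin 2 → Matrix 2 2 ℂ given by ρ̃ 0 0 = !![cos²θ, 0; 0, 0], ρ̃ 0 1 = !![0, 0; 0, sin²θ], ρ̃ 1 0 = (1/2) • !![cos²θ, cosθ·sinθ; cosθ·sinθ, sin²θ], ρ̃ 1 1 = (1/2) • !![cos²θ, −cosθ·sinθ; −cosθ·sinθ, sin²θ] admits no LHS model (the EPR steering paradox '2_Q = 1_C'). -/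
/-!
The ẑ-setting alone already forces the hidden states to be diagonal. Bob's two ẑ-conditional
states `diag(cos²θ, 0)` and `diag(0, sin²θ)` each have a vanishing diagonal entry, and a vanishing
diagonal entry of a sum of positive semidefinite matrices vanishes in every summand. Every hidden
state of positive weight occurs under some ẑ-outcome with positive probability, so it has a zero
diagonal entry, and positive semidefiniteness then kills its off-diagonal entries. Hence every
conditional state of every setting is diagonal, whereas the x̂-conditional states carry the
coherence `cos θ sin θ / 2 ≠ 0`.
-/

open Matrix BigOperators
open scoped ComplexOrder

noncomputable section

namespace Matrix

variable {𝕜 n : Type*} [RCLike 𝕜]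

theorem PosSemidef.apply_eq_zero_of_diag_eq_zero_left [Fintype n] {A : Matrix n n 𝕜}
    (hA : A.PosSemidef) {i : n} (h : A i i = 0) (j : n) : A j i = 0 := by
  classical
  have hcol : A *ᵥ Pi.single i 1 = 0 :=
    (hA.dotProduct_mulVec_zero_iff (Pi.single i 1)).mp (by simp [h])
  simpa using congrFun hcol j

theorem PosSemidef.apply_eq_zero_of_diag_eq_zero_right [Fintype n] {A : Matrix n n 𝕜}
    (hA : A.PosSemidef) {i : n} (h : A i i = 0) (j : n) : A i j = 0 := by
  rw [← hA.isHermitian.apply, hA.apply_eq_zero_of_diag_eq_zero_left h, star_zero]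

theorem diag_eq_zero_of_sum_smul_posSemidef {ι : Type*} [Fintype ι] {c : ι → ℝ}
    {A : ι → Matrix n n 𝕜} (hc : ∀ ξ, 0 ≤ c ξ) (hA : ∀ ξ, (A ξ).PosSemidef) {i : n}
    (h : (∑ ξ, c ξ • A ξ) i i = 0) {ξ : ι} (hξ : 0 < c ξ) : A ξ i i = 0 := by
  have hterm : ∀ ξ, 0 ≤ c ξ • A ξ i i := fun ξ ↦ smul_nonneg (hc ξ) (hA ξ).diag_nonneg
  simp only [sum_apply, smul_apply] at h
  have := (Finset.sum_eq_zero_iff_of_nonneg fun ξ _ ↦ hterm ξ).mp h ξ (Finset.mem_univ ξ)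
  exact (smul_eq_zero.mp this).resolve_left hξ.ne'

end Matrix

theorem HasLHSModel.apply_eq_zero_of_diag_eq_zero {n k : ℕ} {O : Type*} [Fintype O]
    {ρt : Fin k → O → Matrix (Fin n) (Fin n) ℂ} (hρt : HasLHSModel ρt) {ℓ : Fin k} {i j : Fin n}
    (hdiag : ∀ a, ρt ℓ a i i = 0 ∨ ρt ℓ a j j = 0) (ℓ' : Fin k) (a' : O) :
    ρt ℓ' a' i j = 0 := by
  obtain ⟨m, w, ρ, p, hw, -, hρ, hp, hpsum, hmodel⟩ := hρt
  have hmodel' : ∀ ℓ a, ρt ℓ a = ∑ ξ, (p a ℓ ξ * w ξ) • ρ ξ := fun ℓ a ↦ by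
    simp only [hmodel, mul_smul]
  have hρpsd : ∀ ξ, (ρ ξ).PosSemidef := fun ξ ↦ (hρ ξ).1
  have hoff : ∀ ξ, 0 < w ξ → ρ ξ i j = 0 := by
    intro ξ hwξ
    obtain ⟨a, -, hpa⟩ : ∃ a ∈ Finset.univ, 0 < p a ℓ ξ :=
      Finset.exists_lt_of_sum_lt (f := 0) (by simp [hpsum ℓ ξ])
    have hweight : 0 < p a ℓ ξ * w ξ := mul_pos hpa hwξ
    have hc : ∀ ξ, 0 ≤ p a ℓ ξ * w ξ := fun ξ ↦ mul_nonneg (hp a ℓ ξ) (hw ξ)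
    rcases hdiag a with hi | hj
    · rw [hmodel'] at hi
      exact (hρpsd ξ).apply_eq_zero_of_diag_eq_zero_right
        (diag_eq_zero_of_sum_smul_posSemidef hc hρpsd hi hweight) j
    · rw [hmodel'] at hj
      exact (hρpsd ξ).apply_eq_zero_of_diag_eq_zero_left
        (diag_eq_zero_of_sum_smul_posSemidef hc hρpsd hj hweight) i
  rw [hmodel', Matrix.sum_apply]
  refine Finset.sum_eq_zero fun ξ _ ↦ ?_
  rcases (hw ξ).eq_or_lt with hwξ | hwξ
  · simp [← hwξ]
  · simp [hoff ξ hwξ]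

theorem example1_two_qubit_pure_general (θ : ℝ) (hθ : θ ∈ Set.Ioo 0 (Real.pi / 2))
    (ρt : Fin 2 → Fin 2 → Matrix (Fin 2) (Fin 2) ℂ)
    (h00 : ρt 0 0 = !![((Real.cos θ) ^ 2 : ℂ), 0; 0, 0])
    (h01 : ρt 0 1 = !![0, 0; 0, ((Real.sin θ) ^ 2 : ℂ)])
    (h10 : ρt 1 0 = (1 / 2 : ℝ) •
      !![((Real.cos θ) ^ 2 : ℂ), ((Real.cos θ * Real.sin θ : ℝ) : ℂ);
         ((Real.cos θ * Real.sin θ : ℝ) : ℂ), ((Real.sin θ) ^ 2 : ℂ)]) :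
    ¬ HasLHSModel ρt := by
  intro hLHS
  have hcos : Real.cos θ ≠ 0 :=
    (Real.cos_pos_of_mem_Ioo ⟨by linarith [hθ.1, Real.pi_pos], hθ.2⟩).ne'
  have hsin : Real.sin θ ≠ 0 :=
    (Real.sin_pos_of_pos_of_lt_pi hθ.1 (by linarith [hθ.2, Real.pi_pos])).ne'
  have hcoherence : ρt 1 0 0 1 = 0 :=
    hLHS.apply_eq_zero_of_diag_eq_zero (ℓ := 0) (by simp [Fin.forall_fin_two, h00, h01]) 1 0
  simp [h10, -Complex.ofReal_cos, -Complex.ofReal_sin, hcos, hsin] at hcoherence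

/-- Example 1, arbitrary 2-qubit pure entangled state: for
`θ ∈ (0, π/2)`, Bob's four unnormalized conditional states for
`|Ψ(θ)⟩ = cos θ|00⟩ + sin θ|11⟩` under the two-setting protocol `{ẑ, x̂}`
admit no LHS model (the paradox "2_Q = 1_C"). -/
theorem example1_two_qubit_pure (θ : ℝ) (hθ : θ ∈ Set.Ioo 0 (Real.pi / 2))
    (ρt : Fin 2 → Fin 2 → Matrix (Fin 2) (Fin 2) ℂ)
    (h00 : ρt 0 0 = !![((Real.cos θ) ^ 2 : ℂ), 0; 0, 0])
    (h01 : ρt 0 1 = !![0, 0; 0, ((Real.sin θ) ^ 2 : ℂ)])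
    (h10 : ρt 1 0 = (1 / 2 : ℝ) •
      !![((Real.cos θ) ^ 2 : ℂ), ((Real.cos θ * Real.sin θ : ℝ) : ℂ);
         ((Real.cos θ * Real.sin θ : ℝ) : ℂ), ((Real.sin θ) ^ 2 : ℂ)])
    (h11 : ρt 1 1 = (1 / 2 : ℝ) •
      !![((Real.cos θ) ^ 2 : ℂ), (-(Real.cos θ * Real.sin θ : ℝ) : ℂ);
         (-(Real.cos θ * Real.sin θ : ℝ) : ℂ), ((Real.sin θ) ^ 2 : ℂ)]) :
    ¬ HasLHSModel ρt :=
  example1_two_qubit_pure_general θ hθ ρt h00 h01 h10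
end
end

section
/- (Example 3: 3-qubit pure entangled state.) The 2-setting, 4-outcome family ρ̃ : Fin 2 → Fin 4 → Matrix 2 2 ℂ given by: setting 0: ρ̃ 0 0 = (1/6) • !![0,0;0,1], ρ̃ 0 1 = (1/6) • !![1,1;1,1], ρ̃ 0 2 = (1/6) • !![1,−1;−1,1], ρ̃ 0 3 = (1/6) • !![1,0;0,0]; setting 1: ρ̃ 1 0 = (1/24) • !![1,1;1,1], ρ̃ 1 1 = (1/24) • !![1,−1;−1,1], ρ̃ 1 2 = (1/24) • !![1,3;3,9], ρ̃ 1 3 = (1/24) • !![9,−3;−3,1]; admits no LHS model (the EPR steering paradox '2_Q = (1+δ)_C' with 0 < δ < 1). -/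
open Matrix BigOperators
open scoped ComplexOrder

noncomputable section

/-!
Bob's four `xx` states are rank one, with kernels spanned by `(1,-1)`, `(1,1)`, `(3,-1)`, `(1,3)`.
In an LHS model a positive semidefinite summand of a matrix inherits its kernel, so every hidden
state of positive weight (it produces some `xx` outcome) is annihilated by one of these vectors.
The `zz` state `ρ̃ 0 0 = |1⟩⟨1|/6` is annihilated by `|0⟩`, so every hidden state contributing to it
is annihilated by `|0⟩` as well. A `2 × 2` matrix killed by two independent vectors is zero, hence
`ρ̃ 0 0 = 0`, which is absurd.
-/

namespace Matrix

variable {𝕜 n ι : Type*} [RCLike 𝕜] [Fintype n]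

theorem PosSemidef.mulVec_eq_zero_of_sum_mulVec_eq_zero {s : Finset ι} {A : ι → Matrix n n 𝕜}
    (hA : ∀ i ∈ s, (A i).PosSemidef) {v : n → 𝕜} (hv : (∑ i ∈ s, A i) *ᵥ v = 0) :
    ∀ i ∈ s, A i *ᵥ v = 0 := by
  have hq : ∑ i ∈ s, star v ⬝ᵥ A i *ᵥ v = 0 := by
    rw [← dotProduct_sum, ← sum_mulVec, hv, dotProduct_zero]
  intro i hi
  refine ((hA i hi).dotProduct_mulVec_zero_iff v).mp ?_
  exact (Finset.sum_eq_zero_iff_of_nonneg fun j hj => (hA j hj).dotProduct_mulVec_nonneg v).mp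
    hq i hi

theorem PosSemidef.eq_zero_or_mulVec_eq_zero_of_sum_smul [Fintype ι] {c : ι → ℝ}
    (hc : ∀ i, 0 ≤ c i) {ρ : ι → Matrix n n 𝕜} (hρ : ∀ i, (ρ i).PosSemidef) {v : n → 𝕜}
    (hv : (∑ i, c i • ρ i) *ᵥ v = 0) (i : ι) : c i = 0 ∨ ρ i *ᵥ v = 0 := by
  have h := mulVec_eq_zero_of_sum_mulVec_eq_zero (fun i _ => (hρ i).smul (hc i)) hv i
    (Finset.mem_univ i)
  rwa [smul_mulVec, smul_eq_zero] at h

theorem eq_zero_of_mulVec_eq_zero_fin_two {R : Type*} [CommRing R] [NoZeroDivisors R]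
    {A : Matrix (Fin 2) (Fin 2) R} {u : Fin 2 → R} (hu : u 1 ≠ 0) (h₀ : A *ᵥ ![1, 0] = 0)
    (h : A *ᵥ u = 0) : A = 0 := by
  have hcol₀ (i : Fin 2) : A i 0 = 0 := by
    simpa [mulVec, dotProduct, Fin.sum_univ_two] using congrFun h₀ i
  have hcol₁ (i : Fin 2) : A i 1 = 0 := by
    have hi := congrFun h i
    simp only [mulVec, dotProduct, Fin.sum_univ_two, hcol₀, zero_mul, zero_add,
      Pi.zero_apply] at hi
    exact (mul_eq_zero.mp hi).resolve_right hu
  ext i j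
  fin_cases j
  exacts [hcol₀ i, hcol₁ i]

end Matrix

theorem example3_three_qubit_pure_general
    (ρt : Fin 2 → Fin 4 → Matrix (Fin 2) (Fin 2) ℂ)
    (h00 : ρt 0 0 = (1 / 6 : ℝ) • !![0, 0; 0, 1])
    (h10 : ρt 1 0 = (1 / 24 : ℝ) • !![1, 1; 1, 1])
    (h11 : ρt 1 1 = (1 / 24 : ℝ) • !![1, -1; -1, 1])
    (h12 : ρt 1 2 = (1 / 24 : ℝ) • !![1, 3; 3, 9])
    (h13 : ρt 1 3 = (1 / 24 : ℝ) • !![9, -3; -3, 1]) :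
    ¬ HasLHSModel ρt := by
  rintro ⟨m, w, ρ, p, hw, -, hρ, hp, hpsum, heq⟩
  have hsplit (ℓ a) (v : Fin 2 → ℂ) (hv : ρt ℓ a *ᵥ v = 0) (ξ) :
      p a ℓ ξ * w ξ = 0 ∨ ρ ξ *ᵥ v = 0 := by
    refine PosSemidef.eq_zero_or_mulVec_eq_zero_of_sum_smul
      (fun ξ => mul_nonneg (hp a ℓ ξ) (hw ξ)) (fun ξ => (hρ ξ).1) ?_ ξ
    simpa only [heq, smul_smul] using hv
  let u : Fin 4 → Fin 2 → ℂ := ![![1, -1], ![1, 1], ![3, -1], ![1, 3]]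
  have hu (b : Fin 4) : u b 1 ≠ 0 := by fin_cases b <;> norm_num [u]
  have hker (b : Fin 4) : ρt 1 b *ᵥ u b = 0 := by
    fin_cases b <;> simp only [Fin.reduceFinMk, Fin.zero_eta, Fin.mk_one, h10, h11, h12, h13, u,
      cons_val] <;>
    · ext i; fin_cases i <;> norm_num [mulVec, dotProduct]
  have hker₀ : ρt 0 0 *ᵥ ![1, 0] = 0 := by
    ext i; fin_cases i <;> norm_num [h00, mulVec, dotProduct]
  have hnull (ξ : Fin m) : (p 0 0 ξ * w ξ) • ρ ξ = 0 := by
    rcases hsplit 0 0 _ hker₀ ξ with h | h₀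
    · rw [h, zero_smul]
    rcases eq_or_ne (w ξ) 0 with hwξ | hwξ
    · rw [hwξ, mul_zero, zero_smul]
    obtain ⟨b, hb⟩ : ∃ b, p b 1 ξ ≠ 0 := by
      by_contra! h
      simpa [h] using hpsum 1 ξ
    have h₁ := (hsplit 1 b _ (hker b) ξ).resolve_left (mul_ne_zero hb hwξ)
    rw [eq_zero_of_mulVec_eq_zero_fin_two (hu b) h₀ h₁, smul_zero]
  have hzero : ρt 0 0 = 0 := by
    simp only [heq, smul_smul, hnull, Finset.sum_const_zero]
  simpa [h00] using congrFun (congrFun hzero 1) 1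

/-- Example 3, 3-qubit pure entangled state: Bob's eight
unnormalized conditional states for
`|Ψ'⟩ = (1/√6)[|001⟩ + |01⟩(|0⟩+|1⟩) + |10⟩(|0⟩−|1⟩) − |110⟩]` under the `zz`
and `xx` settings admit no LHS model (the paradox "2_Q = (1+δ)_C" with
`0 < δ < 1`). -/
theorem example3_three_qubit_pure
    (ρt : Fin 2 → Fin 4 → Matrix (Fin 2) (Fin 2) ℂ)
    (h00 : ρt 0 0 = (1 / 6 : ℝ) • !![0, 0; 0, 1])
    (h01 : ρt 0 1 = (1 / 6 : ℝ) • !![1, 1; 1, 1])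
    (h02 : ρt 0 2 = (1 / 6 : ℝ) • !![1, -1; -1, 1])
    (h03 : ρt 0 3 = (1 / 6 : ℝ) • !![1, 0; 0, 0])
    (h10 : ρt 1 0 = (1 / 24 : ℝ) • !![1, 1; 1, 1])
    (h11 : ρt 1 1 = (1 / 24 : ℝ) • !![1, -1; -1, 1])
    (h12 : ρt 1 2 = (1 / 24 : ℝ) • !![1, 3; 3, 9])
    (h13 : ρt 1 3 = (1 / 24 : ℝ) • !![9, -3; -3, 1]) :
    ¬ HasLHSModel ρt :=
  example3_three_qubit_pure_general ρt h00 h10 h11 h12 h13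
end
end
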